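/- arXiv:2204.13624 — 4 statements merged into one kernel-verified Lean document; each statement's English description precedes it below -/
import Mathlib

section
/- Let $F_\square \in \mathbb{R}^{3\times 3}$ be invertible with $\det F_\square > 0$, let $N \in \mathbb{R}^3$ be nonzero, let $c_+, c_- > 0$ with $c_+ + c_- = 1$, and let $a \in \mathbb{R}^3$. Set $m = F_\square^{-\mathsf T} N / \lVert F_\square^{-\mathsf T} N \rVert$, $\beta_+ = -c_+ / \lVert F_\square^{-\mathsf T} N \rVert$ and $\beta_- = c_- / \lVert F_\square^{-\mathsf T} N \rVert$. Then the two phase-wise Jacobians are positive, i.e. $\det\big(F_\square + \tfrac{1}{c_+} a N^{\mathsf T}\big) > 0$ and $\det\big(F_\square - \tfrac{1}{c_-} a N^{\mathsf T}\big) > 0$, if and only if $\beta_+ < a \cdot m < \beta_-$. -/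
open Matrix

/-!
By the matrix determinant lemma, `det (F + t • a ⊗ N) = det F * (1 + t * (F⁻ᵀ N ⬝ a))`, so with
`det F > 0` and `w = F⁻ᵀ N` the two Jacobians are positive exactly when `1 + c₊⁻¹ (w ⬝ a) > 0` and
`1 - c₋⁻¹ (w ⬝ a) > 0`, i.e. when `-c₊ < w ⬝ a < c₋`. Dividing by `‖w‖ > 0` (nonzero since `F` is
invertible and `N ≠ 0`) turns this into `β₊ < a ⬝ m < β₋`.
-/

namespace Matrix

variable {n R : Type*} [Fintype n]

theorem dotProduct_self_pos [Ring R] [LinearOrder R] [IsStrictOrderedRing R] {v : n → R}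
    (hv : v ≠ 0) : 0 < v ⬝ᵥ v :=
  lt_of_le_of_ne (Finset.sum_nonneg fun i _ => mul_self_nonneg (v i))
    (Ne.symm (dotProduct_self_eq_zero.not.mpr hv))

variable [DecidableEq n] [CommRing R]

theorem det_add_vecMulVec {A : Matrix n n R} (hA : IsUnit A.det) (u v : n → R) :
    (A + vecMulVec u v).det = A.det * (1 + ((A⁻¹)ᵀ *ᵥ v) ⬝ᵥ u) := by
  rw [vecMulVec_eq Unit, det_add_replicateCol_mul_replicateRow hA]
  congr 1
  rw [det_unique, ← replicateRow_vecMul, add_apply, one_apply_eq, replicateRow_mul_replicateCol_apply,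
    mulVec_transpose]

theorem det_add_smul_vecMulVec {A : Matrix n n R} (hA : IsUnit A.det) (t : R) (u v : n → R) :
    (A + t • vecMulVec u v).det = A.det * (1 + t * (((A⁻¹)ᵀ *ᵥ v) ⬝ᵥ u)) := by
  rw [← smul_vecMulVec, det_add_vecMulVec hA, dotProduct_smul, smul_eq_mul]

theorem inv_transpose_mulVec_ne_zero {A : Matrix n n R} (hA : IsUnit A.det) {v : n → R}
    (hv : v ≠ 0) : (A⁻¹)ᵀ *ᵥ v ≠ 0 := by
  have hunit : IsUnit (A⁻¹)ᵀ := by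
    rw [isUnit_iff_isUnit_det, det_transpose]
    exact isUnit_nonsing_inv_det A hA
  rw [← mulVec_zero (A⁻¹)ᵀ]
  exact (mulVec_injective_of_isUnit hunit).ne hv

end Matrix

theorem one_add_inv_mul_pos_iff {K : Type*} [Field K] [LinearOrder K] [IsStrictOrderedRing K]
    {c x : K} (hc : 0 < c) : 0 < 1 + c⁻¹ * x ↔ -c < x := by
  rw [show 1 + c⁻¹ * x = (c + x) / c by field_simp, div_pos_iff_of_pos_right hc]
  exact neg_lt_iff_pos_add'.symm

theorem jacobian_positivity_iff_admissible_general
    (F : Matrix (Fin 3) (Fin 3) ℝ) (hdet : 0 < F.det)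
    (N : Fin 3 → ℝ) (hN : N ≠ 0)
    (cp cm : ℝ) (hcp : 0 < cp) (hcm : 0 < cm)
    (a : Fin 3 → ℝ)
    (w : Fin 3 → ℝ) (hw : w = (F⁻¹)ᵀ *ᵥ N)
    (m : Fin 3 → ℝ) (hm : m = (Real.sqrt (w ⬝ᵥ w))⁻¹ • w)
    (βp βm : ℝ) (hβp : βp = -cp / Real.sqrt (w ⬝ᵥ w))
    (hβm : βm = cm / Real.sqrt (w ⬝ᵥ w)) :
    (0 < (F + cp⁻¹ • vecMulVec a N).det ∧ 0 < (F - cm⁻¹ • vecMulVec a N).det)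
      ↔ (βp < a ⬝ᵥ m ∧ a ⬝ᵥ m < βm) := by
  have hF : IsUnit F.det := hdet.ne'.isUnit
  have hs : 0 < Real.sqrt (w ⬝ᵥ w) :=
    Real.sqrt_pos.mpr (dotProduct_self_pos (hw ▸ inv_transpose_mulVec_ne_zero hF hN))
  have ham : a ⬝ᵥ m = (w ⬝ᵥ a) / Real.sqrt (w ⬝ᵥ w) := by
    rw [hm, dotProduct_smul, smul_eq_mul, dotProduct_comm a, div_eq_inv_mul]
  have hminus : F - cm⁻¹ • vecMulVec a N = F + cm⁻¹ • vecMulVec (-a) N := by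
    rw [neg_vecMulVec, smul_neg, sub_eq_add_neg]
  rw [hminus, det_add_smul_vecMulVec hF, det_add_smul_vecMulVec hF, ← hw, dotProduct_neg,
    mul_pos_iff_of_pos_left hdet, mul_pos_iff_of_pos_left hdet, one_add_inv_mul_pos_iff hcp,
    one_add_inv_mul_pos_iff hcm, neg_lt_neg_iff, ham, hβp, hβm,
    div_lt_div_iff_of_pos_right hs, div_lt_div_iff_of_pos_right hs]

/-- Positivity of both phase-wise Jacobians `det F± > 0` of the laminate in a
composite boxel is equivalent to the gradient jump vector `a` satisfying
`β₊ < a ⋅ m < β₋`, where `m = F□⁻ᵀ N / ‖F□⁻ᵀ N‖`, `β₊ = -c₊/‖F□⁻ᵀ N‖` and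
`β₋ = c₋/‖F□⁻ᵀ N‖`. -/
theorem jacobian_positivity_iff_admissible
    (F : Matrix (Fin 3) (Fin 3) ℝ) (hF : IsUnit F.det) (hdet : 0 < F.det)
    (N : Fin 3 → ℝ) (hN : N ≠ 0)
    (cp cm : ℝ) (hcp : 0 < cp) (hcm : 0 < cm) (hsum : cp + cm = 1)
    (a : Fin 3 → ℝ)
    (w : Fin 3 → ℝ) (hw : w = (F⁻¹)ᵀ *ᵥ N)
    (m : Fin 3 → ℝ) (hm : m = (Real.sqrt (w ⬝ᵥ w))⁻¹ • w)
    (βp βm : ℝ) (hβp : βp = -cp / Real.sqrt (w ⬝ᵥ w))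
    (hβm : βm = cm / Real.sqrt (w ⬝ᵥ w)) :
    (0 < (F + cp⁻¹ • vecMulVec a N).det ∧ 0 < (F - cm⁻¹ • vecMulVec a N).det)
      ↔ (βp < a ⬝ᵥ m ∧ a ⬝ᵥ m < βm) :=
  jacobian_positivity_iff_admissible_general F hdet N hN cp cm hcp hcm a w hw m hm βp βm hβp hβm
end

section
/- Let $\mathbb{C}_+$ and $\mathbb{C}_-$ be linear maps on the space of symmetric $3 \times 3$ real matrices that are self-adjoint and positive definite with respect to the Frobenius inner product, let $c_+, c_- > 0$ with $c_+ + c_- = 1$, and let $N \in \mathbb{R}^3$ be nonzero. Then for every symmetric $3 \times 3$ matrix $\varepsilon_\square$ there exists a unique vector $a \in \mathbb{R}^3$ such that, setting $\varepsilon_\pm = \varepsilon_\square \pm \frac{1}{c_\pm} \operatorname{sym}(a \otimes N)$, the traction balance $\big(\mathbb{C}_+ \varepsilon_+ - \mathbb{C}_- \varepsilon_-\big) N = 0$ holds; moreover the map $\varepsilon_\square \mapsto a$ is linear. -/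
open Matrix

/-- The symmetric part of the outer product `a ⊗ N`. -/
noncomputable def symOuter (a N : Fin 3 → ℝ) : Matrix (Fin 3) (Fin 3) ℝ :=
  (1 / 2 : ℝ) • (vecMulVec a N + vecMulVec N a)

/-- The Frobenius inner product `⟨A, B⟩ = tr(Aᵀ B)` on real matrices. -/
noncomputable def frob (A B : Matrix (Fin 3) (Fin 3) ℝ) : ℝ :=
  (Aᵀ * B).trace

lemma symOuter_isSymm (a N : Fin 3 → ℝ) : (symOuter a N).IsSymm := by
  unfold Matrix.IsSymm
  ext i j
  simp [symOuter, vecMulVec_apply, Matrix.transpose_apply, Matrix.add_apply]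
  ring

lemma symOuter_add (a b N : Fin 3 → ℝ) :
    symOuter (a + b) N = symOuter a N + symOuter b N := by
  ext i j
  simp [symOuter, vecMulVec_apply, Matrix.add_apply]
  ring

lemma symOuter_smul (r : ℝ) (a N : Fin 3 → ℝ) :
    symOuter (r • a) N = r • symOuter a N := by
  ext i j
  simp [symOuter, vecMulVec_apply, Matrix.add_apply]
  ring

lemma symOuter_eq_zero {a N : Fin 3 → ℝ} (hN : N ≠ 0) (h : symOuter a N = 0) :
    a = 0 := by
  obtain ⟨j, hj⟩ : ∃ j, N j ≠ 0 := by
    by_contra hc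
    push_neg at hc
    exact hN (funext hc)
  have key : ∀ i i', a i * N i' + N i * a i' = 0 := by
    intro i i'
    have := congrFun (congrFun h i) i'
    simp [symOuter, vecMulVec_apply, Matrix.add_apply] at this
    linarith
  have haj : a j = 0 := by
    have := key j j
    have h2 : a j * N j = 0 := by linarith
    rcases mul_eq_zero.mp h2 with h3 | h3
    · exact h3
    · exact absurd h3 hj
  funext i
  have := key i j
  rw [haj] at this
  simp at this
  rcases this with h3 | h3
  · exact h3
  · exact absurd h3 hj

lemma frob_add_right (A B C : Matrix (Fin 3) (Fin 3) ℝ) :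
    frob A (B + C) = frob A B + frob A C := by
  simp [frob, mul_add]

lemma frob_smul_right (r : ℝ) (A B : Matrix (Fin 3) (Fin 3) ℝ) :
    frob A (r • B) = r * frob A B := by
  simp [frob, Matrix.mul_smul]

lemma frob_vecMulVec (a N : Fin 3 → ℝ) (M : Matrix (Fin 3) (Fin 3) ℝ) :
    frob (vecMulVec a N) M = a ⬝ᵥ (M *ᵥ N) := by
  simp only [frob, Matrix.trace, Matrix.diag, Matrix.mul_apply,
    Matrix.transpose_apply, vecMulVec_apply, dotProduct, Matrix.mulVec,
    Finset.mul_sum]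
  rw [Finset.sum_comm]
  refine Finset.sum_congr rfl fun i _ => Finset.sum_congr rfl fun k _ => by ring

lemma frob_symOuter {M : Matrix (Fin 3) (Fin 3) ℝ} (hM : M.IsSymm)
    (a N : Fin 3 → ℝ) : frob (symOuter a N) M = a ⬝ᵥ (M *ᵥ N) := by
  have h1 : frob (vecMulVec a N) M = a ⬝ᵥ (M *ᵥ N) := frob_vecMulVec a N M
  have h2 : frob (vecMulVec N a) M = a ⬝ᵥ (M *ᵥ N) := by
    rw [frob_vecMulVec]
    rw [Matrix.dotProduct_mulVec, ← Matrix.mulVec_transpose, hM,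
      dotProduct_comm]
  have h3 : frob (symOuter a N) M
      = (1/2 : ℝ) * (frob (vecMulVec a N) M + frob (vecMulVec N a) M) := by
    simp [symOuter, frob, Matrix.transpose_add, Matrix.transpose_smul,
      Matrix.add_mul, Matrix.smul_mul]
    ring
  rw [h3, h1, h2]; ring
/-- For self-adjoint, positive-definite stiffness tensors `ℂ±` on symmetric
matrices, volume fractions `c± > 0` summing to one, and a nonzero normal `N`,
the small-strain laminate problem is uniquely solvable: for every symmetric
average strain `ε□` there is a unique gradient jump vector `a` achieving the
traction balance `(ℂ₊ ε₊ - ℂ₋ ε₋) N = 0` with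
`ε± = ε□ ± (1/c±) sym(a ⊗ N)`, and the solution map `ε□ ↦ a` is linear. -/
theorem laminate_unique_solution_linear
    (Cp Cm : Matrix (Fin 3) (Fin 3) ℝ →ₗ[ℝ] Matrix (Fin 3) (Fin 3) ℝ)
    (hCp_symm : ∀ E, E.IsSymm → (Cp E).IsSymm)
    (hCm_symm : ∀ E, E.IsSymm → (Cm E).IsSymm)
    (hCp_sa : ∀ E E', E.IsSymm → E'.IsSymm → frob E (Cp E') = frob (Cp E) E')
    (hCm_sa : ∀ E E', E.IsSymm → E'.IsSymm → frob E (Cm E') = frob (Cm E) E')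
    (hCp_pd : ∀ E, E.IsSymm → E ≠ 0 → 0 < frob E (Cp E))
    (hCm_pd : ∀ E, E.IsSymm → E ≠ 0 → 0 < frob E (Cm E))
    (cp cm : ℝ) (hcp : 0 < cp) (hcm : 0 < cm) (hsum : cp + cm = 1)
    (N : Fin 3 → ℝ) (hN : N ≠ 0) :
    ∃ L : Matrix (Fin 3) (Fin 3) ℝ →ₗ[ℝ] (Fin 3 → ℝ),
      ∀ ε : Matrix (Fin 3) (Fin 3) ℝ, ε.IsSymm →
        ((Cp (ε + cp⁻¹ • symOuter (L ε) N) -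
            Cm (ε - cm⁻¹ • symOuter (L ε) N)) *ᵥ N = 0) ∧
        (∀ a : Fin 3 → ℝ,
          (Cp (ε + cp⁻¹ • symOuter a N) -
            Cm (ε - cm⁻¹ • symOuter a N)) *ᵥ N = 0 → a = L ε) := by
  -- The acoustic operator A
  set A : (Fin 3 → ℝ) →ₗ[ℝ] (Fin 3 → ℝ) :=
    { toFun := fun a =>
        (cp⁻¹ • Cp (symOuter a N) + cm⁻¹ • Cm (symOuter a N)) *ᵥ N
      map_add' := by
        intro a b
        simp only [symOuter_add, map_add, smul_add]
        rw [← Matrix.add_mulVec]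
        congr 1
        abel
      map_smul' := by
        intro r a
        simp only [symOuter_smul, LinearMap.map_smul, RingHom.id_apply]
        rw [← Matrix.smul_mulVec]
        congr 1
        rw [smul_add, smul_comm r cp⁻¹, smul_comm r cm⁻¹] } with hA
  -- The right-hand side operator B
  set B : Matrix (Fin 3) (Fin 3) ℝ →ₗ[ℝ] (Fin 3 → ℝ) :=
    { toFun := fun ε => (Cm ε - Cp ε) *ᵥ N
      map_add' := by
        intro x y
        simp only [map_add]
        rw [← Matrix.add_mulVec]
        congr 1
        abel
      map_smul' := by
        intro r x
        simp only [LinearMap.map_smul, RingHom.id_apply, ← Matrix.smul_mulVec,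
          smul_sub] } with hB
  -- key algebraic identity
  have key : ∀ (a : Fin 3 → ℝ) (ε : Matrix (Fin 3) (Fin 3) ℝ),
      (Cp (ε + cp⁻¹ • symOuter a N) - Cm (ε - cm⁻¹ • symOuter a N)) *ᵥ N
        = A a - B ε := by
    intro a ε
    show _ = (cp⁻¹ • Cp (symOuter a N) + cm⁻¹ • Cm (symOuter a N)) *ᵥ N
        - (Cm ε - Cp ε) *ᵥ N
    rw [← Matrix.sub_mulVec]
    congr 1
    simp only [map_add, map_sub, LinearMap.map_smul]
    abel
  -- A is injective
  have hAinj : Function.Injective A := by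
    rw [← LinearMap.ker_eq_bot, LinearMap.ker_eq_bot']
    intro a ha
    by_contra ha0
    have hS : (symOuter a N).IsSymm := symOuter_isSymm a N
    have hS0 : symOuter a N ≠ 0 := fun h => ha0 (symOuter_eq_zero hN h)
    set T : Matrix (Fin 3) (Fin 3) ℝ :=
      cp⁻¹ • Cp (symOuter a N) + cm⁻¹ • Cm (symOuter a N) with hT
    have hTsymm : T.IsSymm := by
      unfold Matrix.IsSymm
      rw [hT, Matrix.transpose_add, Matrix.transpose_smul, Matrix.transpose_smul,
        hCp_symm _ hS, hCm_symm _ hS]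
    have hzero : a ⬝ᵥ (T *ᵥ N) = 0 := by
      have : T *ᵥ N = 0 := ha
      rw [this, dotProduct_zero]
    rw [← frob_symOuter hTsymm] at hzero
    have hpos : 0 < frob (symOuter a N) T := by
      rw [hT, frob_add_right, frob_smul_right, frob_smul_right]
      have h1 := hCp_pd _ hS hS0
      have h2 := hCm_pd _ hS hS0
      positivity
    rw [hzero] at hpos
    exact lt_irrefl 0 hpos
  have hAbij : Function.Bijective A :=
    ⟨hAinj, (LinearMap.injective_iff_surjective).mp hAinj⟩
  set e : (Fin 3 → ℝ) ≃ₗ[ℝ] (Fin 3 → ℝ) := LinearEquiv.ofBijective A hAbij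
    with he
  refine ⟨(e.symm : (Fin 3 → ℝ) →ₗ[ℝ] (Fin 3 → ℝ)).comp B, fun ε hε => ?_⟩
  have hsol : A (e.symm (B ε)) = B ε := by
    have := e.apply_symm_apply (B ε)
    rwa [he, LinearEquiv.ofBijective_apply] at this
  constructor
  · rw [key]
    simp only [LinearMap.comp_apply, LinearEquiv.coe_coe]
    rw [hsol, sub_self]
  · intro a haeq
    rw [key] at haeq
    have : A a = B ε := by
      have := sub_eq_zero.mp haeq
      exact this
    simp only [LinearMap.comp_apply, LinearEquiv.coe_coe]
    exact hAinj (by rw [this, hsol])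
end

section
/- Let $C_+, C_- \in \mathbb{R}^{n \times n}$, $D \in \mathbb{R}^{n \times d}$, $c_+, c_- > 0$ with $c_+ + c_- = 1$, and suppose $\Delta_f := D^{\mathsf T}\big(\tfrac{1}{c_+} C_+ + \tfrac{1}{c_-} C_-\big) D$ is invertible. For $e \in \mathbb{R}^n$ let $a := \Delta_f^{-1} D^{\mathsf T}(C_- - C_+)\, e$ and define the averaged stress $s := c_+ C_+\big(e + \tfrac{1}{c_+} D a\big) + c_- C_-\big(e - \tfrac{1}{c_-} D a\big)$. Then $s = C_\square\, e$, where the effective tangent is $C_\square := c_+ C_+ + c_- C_- \;-\; (C_+ - C_-)\, D\, \Delta_f^{-1} D^{\mathsf T}\, (C_+ - C_-)$. -/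
open Matrix

/-- The volume-averaged laminate stress is linear in the average strain with
the closed-form effective tangent
`C□ = c₊C₊ + c₋C₋ - (C₊ - C₋) D Δ_f⁻¹ Dᵀ (C₊ - C₋)`. -/
theorem effective_tangent_formula
    {n d : ℕ}
    (Cp Cm : Matrix (Fin n) (Fin n) ℝ) (D : Matrix (Fin n) (Fin d) ℝ)
    (cp cm : ℝ) (hcp : 0 < cp) (hcm : 0 < cm) (hsum : cp + cm = 1)
    (Δf : Matrix (Fin d) (Fin d) ℝ)
    (hΔf : Δf = Dᵀ * (cp⁻¹ • Cp + cm⁻¹ • Cm) * D)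
    (hinv : IsUnit Δf.det)
    (e : Fin n → ℝ)
    (a : Fin d → ℝ) (ha : a = Δf⁻¹ *ᵥ (Dᵀ *ᵥ ((Cm - Cp) *ᵥ e)))
    (s : Fin n → ℝ)
    (hs : s = cp • (Cp *ᵥ (e + cp⁻¹ • (D *ᵥ a))) +
              cm • (Cm *ᵥ (e - cm⁻¹ • (D *ᵥ a))))
    (Csq : Matrix (Fin n) (Fin n) ℝ)
    (hCsq : Csq = cp • Cp + cm • Cm - (Cp - Cm) * D * Δf⁻¹ * Dᵀ * (Cp - Cm)) :
    s = Csq *ᵥ e := by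
  subst ha hs hCsq
  simp only [Matrix.mulVec_add, Matrix.mulVec_sub, Matrix.mulVec_smul,
    Matrix.add_mulVec, Matrix.sub_mulVec, Matrix.smul_mulVec,
    ← Matrix.mulVec_mulVec, smul_add, smul_sub, smul_smul,
    mul_inv_cancel₀ hcp.ne', mul_inv_cancel₀ hcm.ne', one_smul]
  module
end

section
/- Let $\kappa_+, \kappa_- \in \mathbb{R}^{3\times 3}$ be symmetric positive definite matrices, let $c_+, c_- > 0$ with $c_+ + c_- = 1$, let $N \in \mathbb{R}^3$ be nonzero, and set $\Delta_f = N \cdot \big(\tfrac{1}{c_+}\kappa_+ + \tfrac{1}{c_-}\kappa_-\big) N > 0$. For $g_\square \in \mathbb{R}^3$ let $a = \Delta_f^{-1} N \cdot (\kappa_- - \kappa_+) g_\square$ and $g_\pm = g_\square \pm \tfrac{a}{c_\pm} N$. Then the averaged flux $q_\square := c_+ \kappa_+ g_+ + c_- \kappa_- g_-$ satisfies $q_\square = \kappa_\square\, g_\square$ with the effective conductivity $\kappa_\square := c_+ \kappa_+ + c_- \kappa_- - \tfrac{1}{\Delta_f}\,\big((\kappa_+ - \kappa_-) N\big) \big((\kappa_+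 - \kappa_-) N\big)^{\mathsf T}$, and $\kappa_\square$ is a symmetric matrix. -/
open Matrix

/-!
Since the two phase gradients differ from `g□` by `± a N / c±`, the volume average of the
phase fluxes is `(c₊κ₊ + c₋κ₋) g□ + a (κ₊ - κ₋) N`. Symmetry of `κ₊ - κ₋` turns the jump
into `a = -Δ_f⁻¹ ((κ₊ - κ₋) N ⬝ g□)`, so the correction term is the rank-one matrix
`-Δ_f⁻¹ ((κ₊ - κ₋) N) ((κ₊ - κ₋) N)ᵀ` applied to `g□`, which is symmetric like `κ±`.
-/

namespace Matrix

variable {n R : Type*}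

lemma isSymm_vecMulVec_self [CommMagma R] (v : n → R) : (vecMulVec v v).IsSymm :=
  transpose_vecMulVec v v

variable [Fintype n]

lemma IsSymm.dotProduct_mulVec_comm [CommSemiring R] {M : Matrix n n R} (hM : M.IsSymm)
    (x y : n → R) : x ⬝ᵥ (M *ᵥ y) = (M *ᵥ x) ⬝ᵥ y := by
  rw [dotProduct_mulVec, ← mulVec_transpose, hM.eq]

lemma sub_smul_vecMulVec_self_mulVec [CommRing R] (M : Matrix n n R) (s : R) (v w : n → R) :
    (M - s • vecMulVec v v) *ᵥ w = M *ᵥ w - (s * (v ⬝ᵥ w)) • v := by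
  rw [sub_mulVec, smul_mulVec, vecMulVec_mulVec, op_smul_eq_smul, smul_smul]

end Matrix

section Laminate

variable {n K : Type*} [Fintype n] [Field K]

lemma laminate_average_flux (A B : Matrix n n K) {cp cm : K} (hcp : cp ≠ 0) (hcm : cm ≠ 0)
    (g N : n → K) (a : K) :
    cp • (A *ᵥ (g + (a / cp) • N)) + cm • (B *ᵥ (g - (a / cm) • N)) =
      (cp • A + cm • B) *ᵥ g + a • ((A - B) *ᵥ N) := by
  simp only [mulVec_add, mulVec_sub, mulVec_smul, smul_add, smul_sub, smul_smul,
    mul_div_cancel₀ a hcp, mul_div_cancel₀ a hcm, add_mulVec, sub_mulVec, smul_mulVec]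
  module

lemma laminate_jump_dotProduct {A B : Matrix n n K} (hAB : (A - B).IsSymm) (N g : n → K) :
    N ⬝ᵥ ((B - A) *ᵥ g) = -(((A - B) *ᵥ N) ⬝ᵥ g) := by
  rw [← neg_sub A B, neg_mulVec, dotProduct_neg, hAB.dotProduct_mulVec_comm]

end Laminate

theorem thermal_effective_conductivity_general
    (κp κm : Matrix (Fin 3) (Fin 3) ℝ)
    (hκp : κp.PosDef) (hκm : κm.PosDef)
    (cp cm : ℝ) (hcp : 0 < cp) (hcm : 0 < cm)
    (N : Fin 3 → ℝ)
    (Δf : ℝ)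
    (g : Fin 3 → ℝ)
    (a : ℝ) (ha : a = Δf⁻¹ * (N ⬝ᵥ ((κm - κp) *ᵥ g)))
    (gp gm : Fin 3 → ℝ) (hgp : gp = g + (a / cp) • N) (hgm : gm = g - (a / cm) • N)
    (q : Fin 3 → ℝ) (hq : q = cp • (κp *ᵥ gp) + cm • (κm *ᵥ gm))
    (κsq : Matrix (Fin 3) (Fin 3) ℝ)
    (hκsq : κsq = cp • κp + cm • κm -
      Δf⁻¹ • vecMulVec ((κp - κm) *ᵥ N) ((κp - κm) *ᵥ N)) :
    q = κsq *ᵥ g ∧ κsq.IsSymm := by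
  have hsp : κp.IsSymm := isHermitian_iff_isSymm.mp hκp.isHermitian
  have hsm : κm.IsSymm := isHermitian_iff_isSymm.mp hκm.isHermitian
  have hjump : a = -(Δf⁻¹ * (((κp - κm) *ᵥ N) ⬝ᵥ g)) := by
    rw [ha, laminate_jump_dotProduct (hsp.sub hsm), mul_neg]
  refine ⟨?_, ?_⟩
  · rw [hq, hgp, hgm, laminate_average_flux κp κm hcp.ne' hcm.ne', hκsq,
      sub_smul_vecMulVec_self_mulVec, hjump, neg_smul, ← sub_eq_add_neg]
  · rw [hκsq]
    exact ((hsp.smul cp).add (hsm.smul cm)).sub ((isSymm_vecMulVec_self _).smul _)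

/-- Effective thermal conductivity of the composite-voxel laminate: the
volume-averaged heat flux satisfies `q□ = κ□ g□` with
`κ□ = c₊κ₊ + c₋κ₋ - Δ_f⁻¹ ((κ₊-κ₋)N)((κ₊-κ₋)N)ᵀ`, and `κ□` is symmetric. -/
theorem thermal_effective_conductivity
    (κp κm : Matrix (Fin 3) (Fin 3) ℝ)
    (hκp : κp.PosDef) (hκm : κm.PosDef)
    (cp cm : ℝ) (hcp : 0 < cp) (hcm : 0 < cm) (hsum : cp + cm = 1)
    (N : Fin 3 → ℝ) (hN : N ≠ 0)
    (Δf : ℝ) (hΔf : Δf = N ⬝ᵥ ((cp⁻¹ • κp + cm⁻¹ • κm) *ᵥ N))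
    (hΔpos : 0 < Δf)
    (g : Fin 3 → ℝ)
    (a : ℝ) (ha : a = Δf⁻¹ * (N ⬝ᵥ ((κm - κp) *ᵥ g)))
    (gp gm : Fin 3 → ℝ) (hgp : gp = g + (a / cp) • N) (hgm : gm = g - (a / cm) • N)
    (q : Fin 3 → ℝ) (hq : q = cp • (κp *ᵥ gp) + cm • (κm *ᵥ gm))
    (κsq : Matrix (Fin 3) (Fin 3) ℝ)
    (hκsq : κsq = cp • κp + cm • κm -
      Δf⁻¹ • vecMulVec ((κp - κm) *ᵥ N) ((κp - κm) *ᵥ N)) :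
    q = κsq *ᵥ g ∧ κsq.IsSymm :=
  thermal_effective_conductivity_general κp κm hκp hκm cp cm hcp hcm N Δf g a ha gp gm hgp hgm q hq
    κsq hκsq
end
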